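/- arXiv:1009.4034 — 8 statements merged into one kernel-verified Lean document; each statement's English description precedes it below -/
import Mathlib

section
/- For every natural number m and every integer r ≥ 1, the sum over all r-tuples (m_1, …, m_r) of natural numbers with m_1 + ⋯ + m_r = m of the product C_{m_1} · C_{m_2} ⋯ C_{m_r} of Catalan numbers equals r · (2m+r−1)! / (m! · (m+r)!). -/
/-!
The sum is the `m`-th coefficient of `C ^ r`, where `C = ∑ catalan n * X ^ n` satisfies
`C = 1 + X * C ^ 2`. Hence `C ^ (r + 1) = C ^ r + X * C ^ (r + 2)`, i.e. the coefficients
`a r m` obey `a (r + 1) (m + 1) = a r (m + 1) + a (r + 2) m`, with `a r 0 = 1` and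
`a 0 (m + 1) = 0`. The closed form satisfies the same recursion and boundary values (it vanishes
at `r = 0` too, failing only at `r = m = 0`), so an induction on `m`, and inside it on `r`
starting from `r = 0`, identifies the two.
-/

open Finset PowerSeries
open scoped Nat

theorem Finset.Nat.sum_antidiagonalTuple_succ {M : Type*} [AddCommMonoid M] (k n : ℕ)
    (g : (Fin (k + 1) → ℕ) → M) :
    ∑ f ∈ Nat.antidiagonalTuple (k + 1) n, g f
      = ∑ ab ∈ antidiagonal n, ∑ f ∈ Nat.antidiagonalTuple k ab.2, g (Fin.cons ab.1 f) := by
  rw [sum_sigma']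
  refine sum_nbij' (fun f => ⟨(f 0, ∑ i, Fin.tail f i), Fin.tail f⟩)
    (fun p => Fin.cons p.1.1 p.2) ?_ ?_ (fun f _ => Fin.cons_self_tail f) ?_ (fun _ _ => by simp)
  · simp [Nat.mem_antidiagonalTuple, Fin.sum_univ_succ, Fin.tail]
  · rintro ⟨⟨a, b⟩, f⟩
    simp +contextual [Nat.mem_antidiagonalTuple, Fin.sum_univ_succ]
  · rintro ⟨⟨a, b⟩, f⟩
    simp +contextual [Nat.mem_antidiagonalTuple, Fin.tail]

namespace PowerSeries

theorem coeff_pow_eq_sum_antidiagonalTuple {R : Type*} [CommSemiring R] (p : PowerSeries R)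
    (k n : ℕ) :
    coeff n (p ^ k) = ∑ f ∈ Finset.Nat.antidiagonalTuple k n, ∏ i, coeff (f i) p := by
  induction k generalizing n with
  | zero => cases n <;> simp [coeff_one]
  | succ k ih =>
    simp only [pow_succ', coeff_mul, ih, mul_sum, Finset.Nat.sum_antidiagonalTuple_succ,
      Fin.prod_univ_succ, Fin.cons_zero, Fin.cons_succ]

theorem coeff_zero_catalanSeries_pow (r : ℕ) : coeff 0 (catalanSeries ^ r) = 1 := by
  simp [coeff_zero_eq_constantCoeff, catalanSeries_constantCoeff]

theorem coeff_succ_catalanSeries_pow_succ (r m : ℕ) :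
    coeff (m + 1) (catalanSeries ^ (r + 1)) =
      coeff (m + 1) (catalanSeries ^ r) + coeff m (catalanSeries ^ (r + 2)) := by
  have hpow : catalanSeries ^ (r + 1) = catalanSeries ^ r + X * catalanSeries ^ (r + 2) := by
    rw [pow_succ]
    nth_rw 2 [← catalanSeries_sq_mul_X_add_one]
    ring
  rw [hpow, map_add, coeff_succ_X_mul]

end PowerSeries

def catalanPowCoeff (r m : ℕ) : ℚ :=
  r * (2 * m + r - 1)! / (m ! * (m + r)!)

theorem catalanPowCoeff_zero_right {r : ℕ} (hr : r ≠ 0) : catalanPowCoeff r 0 = 1 := by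
  obtain ⟨r, rfl⟩ := Nat.exists_eq_add_one_of_ne_zero hr
  simp [catalanPowCoeff, Nat.factorial_succ, Nat.factorial_ne_zero, Nat.cast_add_one_ne_zero]

theorem catalanPowCoeff_succ_succ (r m : ℕ) :
    catalanPowCoeff (r + 1) (m + 1) = catalanPowCoeff r (m + 1) + catalanPowCoeff (r + 2) m := by
  have h1 : 2 * (m + 1) + (r + 1) - 1 = 2 * m + r + 1 + 1 := by omega
  have h2 : 2 * (m + 1) + r - 1 = 2 * m + r + 1 := by omega
  have h3 : 2 * m + (r + 2) - 1 = 2 * m + r + 1 := by omega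
  have e1 : m + 1 + (r + 1) = m + r + 1 + 1 := by omega
  have e2 : m + (r + 2) = m + r + 1 + 1 := by omega
  have e3 : m + 1 + r = m + r + 1 := by omega
  simp only [catalanPowCoeff, h1, h2, h3, e1, e2, e3, Nat.factorial_succ]
  push_cast
  field_simp
  ring

theorem coeff_catalanSeries_pow {r : ℕ} (hr : r ≠ 0) (m : ℕ) :
    ((coeff m (catalanSeries ^ r) : ℕ) : ℚ) = catalanPowCoeff r m := by
  induction m generalizing r with
  | zero => simp [coeff_zero_catalanSeries_pow, catalanPowCoeff_zero_right hr]
  | succ m ih =>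
    clear hr
    induction r with
    | zero => simp [catalanPowCoeff]
    | succ r ihr =>
      rw [coeff_succ_catalanSeries_pow_succ, Nat.cast_add, ihr, ih (by omega),
        catalanPowCoeff_succ_succ]

theorem stmt_1 (m r : ℕ) (hr : 1 ≤ r) :
    (∑ f ∈ Finset.Nat.antidiagonalTuple r m, ∏ i : Fin r, (catalan (f i) : ℚ))
    = (r : ℚ) * (Nat.factorial (2 * m + r - 1) : ℚ) /
        ((Nat.factorial m : ℚ) * (Nat.factorial (m + r) : ℚ)) := by
  have h := coeff_catalanSeries_pow (by omega : r ≠ 0) m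
  rw [coeff_pow_eq_sum_antidiagonalTuple] at h
  push_cast [catalanSeries_coeff] at h
  exact h
end

section
/- For every real number c with 0 ≤ c ≤ 1, ∫_{c−2}^{c+2} √(4−(s−c)²)/(2π(1+cs)) ds = 1. -/
/-!
After the shift `t = s - c` the integral is `(2π)⁻¹ ∫_{-2}^{2} √(4 - t²) / (1 + c² + c t) dt`.
Dividing `4 - t²` by `1 + c² + c t` writes the integrand as
`((1 + c² - c t) - (1 - c²)² / (1 + c² + c t)) / (c² √(4 - t²))`, whose primitive is
`((1 + c²) arcsin (t/2) + c √(4 - t²) - (1 - c²) arcsin u(t)) / c²` with the Möbius function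
`u(t) = (4c + (1 + c²) t) / (2 (1 + c² + c t))`, which maps `±2` to `±1`; its increase over `[-2, 2]`
is `2π`. For `c = 0` the integral is the area of a half-disc, and for `c² = 1` the last term drops.
Since the integrand is nonnegative, the fundamental theorem of calculus applies without a separate
integrability argument at the singular endpoint when `c = 1`.
-/

open Real Set intervalIntegral

theorem integral_eq_sub_of_hasDerivAt_of_nonneg {f f' : ℝ → ℝ} {a b : ℝ} (hab : a ≤ b)
    (hcont : ContinuousOn f (Icc a b)) (hderiv : ∀ x ∈ Ioo a b, HasDerivAt f (f' x) x)
    (hpos : ∀ x ∈ Ioo a b, 0 ≤ f' x) : ∫ x in a..b, f' x = f b - f a :=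
  integral_eq_sub_of_hasDerivAt_of_le hab hcont hderiv <|
    (intervalIntegrable_iff_integrableOn_Ioc_of_le hab).2 <|
      integrableOn_deriv_of_nonneg hcont hderiv hpos

theorem HasDerivAt.arcsin_of_one_sub_sq_eq {g : ℝ → ℝ} {g' p t : ℝ} (hg : HasDerivAt g g' t)
    (hp : 0 < p) (hsq : 1 - g t ^ 2 = p ^ 2) :
    HasDerivAt (fun x => arcsin (g x)) (g' / p) t := by
  have hne : g t ≠ -1 ∧ g t ≠ 1 := by
    constructor <;> rintro h <;> rw [h] at hsq <;> nlinarith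
  refine ((hasDerivAt_arcsin hne.1 hne.2).comp t hg).congr_deriv ?_
  rw [hsq, sqrt_sq hp.le]
  ring

theorem integral_sqrt_four_sub_sq : ∫ t in (-2 : ℝ)..2, √(4 - t ^ 2) = 2 * π := by
  have h := integral_comp_mul_left (fun t : ℝ => √(4 - t ^ 2)) (c := 2) two_ne_zero
    (a := -1) (b := 1)
  have hscale : ∀ x : ℝ, √(4 - (2 * x) ^ 2) = 2 * √(1 - x ^ 2) := fun x => by
    rw [show 4 - (2 * x) ^ 2 = 2 ^ 2 * (1 - x ^ 2) by ring, sqrt_mul (by norm_num),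
      sqrt_sq (by norm_num)]
  simp only [hscale, intervalIntegral.integral_const_mul, integral_sqrt_one_sub_sq] at h
  norm_num at h
  linarith

section

variable {c t : ℝ}

theorem one_sub_sq_moebius_eq (hct : 1 + c ^ 2 + c * t ≠ 0) (ht : 0 ≤ 4 - t ^ 2) :
    1 - ((4 * c + (1 + c ^ 2) * t) / (2 * (1 + c ^ 2 + c * t))) ^ 2
      = ((1 - c ^ 2) * √(4 - t ^ 2) / (2 * (1 + c ^ 2 + c * t))) ^ 2 := by
  rw [div_pow, div_pow, mul_pow (1 - c ^ 2), sq_sqrt ht]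
  field_simp
  ring

theorem one_add_sq_add_mul_pos (ht : t ∈ Ioo (-2 : ℝ) 2) : 0 < 1 + c ^ 2 + c * t := by
  nlinarith [sq_nonneg (c + t / 2), ht.1, ht.2]

theorem one_add_sq_add_mul_pos_of_sq_lt_one (hc : c ^ 2 < 1) (ht : t ∈ Icc (-2 : ℝ) 2) :
    0 < 1 + c ^ 2 + c * t := by
  have ht2 : t ^ 2 ≤ 4 := by nlinarith [ht.1, ht.2]
  have hct : (c * t) ^ 2 ≤ 4 * c ^ 2 := by
    rw [mul_pow, mul_comm 4]
    exact mul_le_mul_of_nonneg_left ht2 (sq_nonneg c)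
  nlinarith [sq_nonneg (1 + c ^ 2 + c * t), sq_nonneg (1 - c ^ 2), sq_nonneg (1 + c ^ 2 - c * t)]

theorem hasDerivAt_sqrt_four_sub_sq (ht : t ∈ Ioo (-2 : ℝ) 2) :
    HasDerivAt (fun t => √(4 - t ^ 2)) (-t / √(4 - t ^ 2)) t := by
  have hpos : 0 < 4 - t ^ 2 := by nlinarith [ht.1, ht.2]
  refine (((hasDerivAt_pow 2 t).const_sub 4).sqrt hpos.ne').congr_deriv ?_
  field_simp
  ring

theorem hasDerivAt_arcsin_add_sqrt (c : ℝ) (ht : t ∈ Ioo (-2 : ℝ) 2) :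
    HasDerivAt (fun t => (1 + c ^ 2) * arcsin (t / 2) + c * √(4 - t ^ 2))
      ((1 + c ^ 2 - c * t) / √(4 - t ^ 2)) t := by
  have hpos : 0 < √(4 - t ^ 2) := sqrt_pos.2 (by nlinarith [ht.1, ht.2])
  have harcsin : HasDerivAt (fun t => arcsin (t / 2)) ((1 / 2) / (√(4 - t ^ 2) / 2)) t := by
    refine ((hasDerivAt_id' t).div_const 2).arcsin_of_one_sub_sq_eq (half_pos hpos) ?_
    rw [div_pow, div_pow, sq_sqrt (by nlinarith [ht.1, ht.2])]
    ring
  refine ((harcsin.const_mul _).add ((hasDerivAt_sqrt_four_sub_sq ht).const_mul c)).congr_deriv ?_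
  field_simp
  ring

theorem hasDerivAt_arcsin_moebius (hc : c ^ 2 < 1) (ht : t ∈ Ioo (-2 : ℝ) 2) :
    HasDerivAt (fun t => arcsin ((4 * c + (1 + c ^ 2) * t) / (2 * (1 + c ^ 2 + c * t))))
      ((1 - c ^ 2) / ((1 + c ^ 2 + c * t) * √(4 - t ^ 2))) t := by
  have hden := one_add_sq_add_mul_pos (c := c) ht
  have hsqrt : 0 < √(4 - t ^ 2) := sqrt_pos.2 (by nlinarith [ht.1, ht.2])
  have hquot : HasDerivAt (fun t => (4 * c + (1 + c ^ 2) * t) / (2 * (1 + c ^ 2 + c * t)))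
      ((1 - c ^ 2) ^ 2 / (2 * (1 + c ^ 2 + c * t) ^ 2)) t := by
    refine ((((hasDerivAt_id' t).const_mul (1 + c ^ 2)).const_add (4 * c)).div
      ((((hasDerivAt_id' t).const_mul c).const_add (1 + c ^ 2)).const_mul 2)
      (by positivity)).congr_deriv ?_
    field_simp
    ring
  have hc' : 0 < 1 - c ^ 2 := sub_pos.2 hc
  refine (hquot.arcsin_of_one_sub_sq_eq (by positivity)
    (one_sub_sq_moebius_eq hden.ne' (by nlinarith [ht.1, ht.2]))).congr_deriv ?_
  field_simp

theorem integral_sqrt_four_sub_sq_div_eq_sub {F : ℝ → ℝ} (hF : ContinuousOn F (Icc (-2) 2))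
    (hF' : ∀ t ∈ Ioo (-2 : ℝ) 2, HasDerivAt F (√(4 - t ^ 2) / (1 + c ^ 2 + c * t)) t) :
    ∫ t in (-2 : ℝ)..2, √(4 - t ^ 2) / (1 + c ^ 2 + c * t) = F 2 - F (-2) :=
  integral_eq_sub_of_hasDerivAt_of_nonneg (by norm_num) hF hF' fun _ ht =>
    div_nonneg (sqrt_nonneg _) (one_add_sq_add_mul_pos ht).le

theorem integral_sqrt_four_sub_sq_div_of_sq_eq_one (hc : c ^ 2 = 1) :
    ∫ t in (-2 : ℝ)..2, √(4 - t ^ 2) / (1 + c ^ 2 + c * t) = 2 * π := by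
  rw [integral_sqrt_four_sub_sq_div_eq_sub
    (F := fun t => (1 + c ^ 2) * arcsin (t / 2) + c * √(4 - t ^ 2)) (by fun_prop)]
  · norm_num [hc]
    ring
  intro t ht
  have hsq : 0 < 4 - t ^ 2 := by nlinarith [ht.1, ht.2]
  refine (hasDerivAt_arcsin_add_sqrt c ht).congr_deriv ?_
  rw [div_eq_div_iff (sqrt_pos.2 hsq).ne' (one_add_sq_add_mul_pos ht).ne', mul_self_sqrt hsq.le]
  linear_combination (c ^ 2 + 3 - t ^ 2) * hc

theorem integral_sqrt_four_sub_sq_div_of_sq_lt_one (hc0 : c ≠ 0) (hc1 : c ^ 2 < 1) :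
    ∫ t in (-2 : ℝ)..2, √(4 - t ^ 2) / (1 + c ^ 2 + c * t) = 2 * π := by
  set u : ℝ → ℝ := fun t => (4 * c + (1 + c ^ 2) * t) / (2 * (1 + c ^ 2 + c * t)) with hu
  have hden : ∀ t ∈ Icc (-2 : ℝ) 2, 2 * (1 + c ^ 2 + c * t) ≠ 0 := fun t ht =>
    mul_ne_zero two_ne_zero (one_add_sq_add_mul_pos_of_sq_lt_one hc1 ht).ne'
  have hcont : ContinuousOn u (Icc (-2) 2) := ContinuousOn.div (by fun_prop) (by fun_prop) hden
  rw [integral_sqrt_four_sub_sq_div_eq_sub (F := fun t =>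
    ((1 + c ^ 2) * arcsin (t / 2) + c * √(4 - t ^ 2) - (1 - c ^ 2) * arcsin (u t)) / c ^ 2)
    (by fun_prop)]
  · have hu2 : u 2 = 1 := by
      rw [hu, div_eq_one_iff_eq (hden 2 (by norm_num))]
      ring
    have hu_neg2 : u (-2) = -1 := by
      rw [hu, div_eq_iff (hden (-2) (by norm_num))]
      ring
    norm_num [hu2, hu_neg2]
    field_simp
    ring
  intro t ht
  refine (((hasDerivAt_arcsin_add_sqrt c ht).sub
    ((hasDerivAt_arcsin_moebius hc1 ht).const_mul (1 - c ^ 2))).div_const (c ^ 2)).congr_deriv ?_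
  have hsq : 0 < 4 - t ^ 2 := by nlinarith [ht.1, ht.2]
  have hpos := one_add_sq_add_mul_pos (c := c) ht
  field_simp
  rw [sq_sqrt hsq.le]
  ring

theorem integral_sqrt_four_sub_sq_div (hc : c ^ 2 ≤ 1) :
    ∫ t in (-2 : ℝ)..2, √(4 - t ^ 2) / (1 + c ^ 2 + c * t) = 2 * π := by
  rcases eq_or_ne c 0 with rfl | hc0
  · simpa using integral_sqrt_four_sub_sq
  rcases hc.lt_or_eq with hc1 | hc1
  · exact integral_sqrt_four_sub_sq_div_of_sq_lt_one hc0 hc1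
  · exact integral_sqrt_four_sub_sq_div_of_sq_eq_one hc1

end

theorem stmt_6 (c : ℝ) (hc0 : 0 ≤ c) (hc1 : c ≤ 1) :
    (∫ s in (c - 2)..(c + 2), Real.sqrt (4 - (s - c) ^ 2) / (2 * Real.pi * (1 + c * s))) = 1 := by
  have hshift := integral_comp_add_right
    (fun s => √(4 - (s - c) ^ 2) / (2 * π * (1 + c * s))) c (a := -2) (b := 2)
  have hterm : ∀ t, √(4 - (t + c - c) ^ 2) / (2 * π * (1 + c * (t + c)))
      = (2 * π)⁻¹ * (√(4 - t ^ 2) / (1 + c ^ 2 + c * t)) := fun t => by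
    rw [add_sub_cancel_right]
    field_simp
    ring
  simp only [hterm, intervalIntegral.integral_const_mul,
    integral_sqrt_four_sub_sq_div (by nlinarith : c ^ 2 ≤ 1)] at hshift
  rw [show c - 2 = -2 + c by ring, show c + 2 = 2 + c by ring, ← hshift]
  field_simp
end

section
/- For every real number c > 1, ∫_{c−2}^{c+2} √(4−(s−c)²)/(2π(1+cs)) ds = 1/c². -/
/-!
An explicit antiderivative: with `u(s) = (4c + (1 + c²)(s - c)) / (2(1 + cs))`, a Möbius map
sending `c ∓ 2` to `∓1`, the function
`((1 + c²) arcsin ((s - c)/2) + c √(4 - (s - c)²) - (c² - 1) arcsin (u s)) / (2πc²)`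
has derivative `√(4 - (s - c)²) / (2π(1 + cs))` on `(c - 2, c + 2)`, because
`√(1 - u²) = (c² - 1) √(4 - (s - c)²) / (2(1 + cs))` there. At the endpoints the square root
vanishes and both arcsines equal `±π/2`, so the integral is `(2 · π/2) / (πc²) = 1/c²`.
-/

open Real Set

namespace TransitionDensity

variable {c : ℝ}

lemma one_add_mul_pos (hc : 1 < c ^ 2) {s : ℝ} (hs : s ∈ Icc (c - 2) (c + 2)) :
    0 < 1 + c * s := by
  have h : (s - c) ^ 2 ≤ 4 := by nlinarith [hs.1, hs.2]
  nlinarith [sq_nonneg (c * (s - c) + 1 + c ^ 2), sq_nonneg (c ^ 2 - 1)]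

lemma four_sub_sq_pos {s : ℝ} (hs : s ∈ Ioo (c - 2) (c + 2)) : 0 < 4 - (s - c) ^ 2 := by
  nlinarith [hs.1, hs.2]

noncomputable def mobius (c s : ℝ) : ℝ := (4 * c + (1 + c ^ 2) * (s - c)) / (2 * (1 + c * s))

noncomputable def antideriv (c s : ℝ) : ℝ :=
  ((1 + c ^ 2) * arcsin ((s - c) / 2) + c * √(4 - (s - c) ^ 2)
    - (c ^ 2 - 1) * arcsin (mobius c s)) / (2 * π * c ^ 2)

lemma mobius_right (hc : 1 < c ^ 2) : mobius c (c + 2) = 1 := by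
  have := one_add_mul_pos hc (s := c + 2) ⟨by linarith, le_rfl⟩
  rw [mobius, div_eq_one_iff_eq (by positivity)]
  ring

lemma mobius_left (hc : 1 < c ^ 2) : mobius c (c - 2) = -1 := by
  have := one_add_mul_pos hc (s := c - 2) ⟨le_rfl, by linarith⟩
  rw [mobius, div_eq_iff (by positivity)]
  ring

lemma sqrt_one_sub_mobius_sq (hc : 1 < c ^ 2) {s : ℝ} (hs : 0 < 1 + c * s)
    (hs' : 0 ≤ 4 - (s - c) ^ 2) :
    √(1 - mobius c s ^ 2) = (c ^ 2 - 1) * √(4 - (s - c) ^ 2) / (2 * (1 + c * s)) := by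
  have hsq : 1 - mobius c s ^ 2 = ((c ^ 2 - 1) * √(4 - (s - c) ^ 2) / (2 * (1 + c * s))) ^ 2 := by
    rw [div_pow, mul_pow, sq_sqrt hs', mobius]
    field_simp
    ring
  rw [hsq, sqrt_sq (by have := sub_pos.2 hc; positivity)]

lemma hasDerivAt_mobius {s : ℝ} (hs : 1 + c * s ≠ 0) :
    HasDerivAt (mobius c) ((c ^ 2 - 1) ^ 2 / (2 * (1 + c * s) ^ 2)) s := by
  have hnum : HasDerivAt (fun s ↦ 4 * c + (1 + c ^ 2) * (s - c)) (1 + c ^ 2) s := by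
    simpa using (((hasDerivAt_id s).sub_const c).const_mul (1 + c ^ 2)).const_add (4 * c)
  have hden : HasDerivAt (fun s ↦ 2 * (1 + c * s)) (2 * c) s := by
    simpa [mul_comm] using (((hasDerivAt_id s).const_mul c).const_add 1).const_mul 2
  refine (hnum.div hden (mul_ne_zero two_ne_zero hs)).congr_deriv ?_
  field_simp
  ring

lemma hasDerivAt_arcsin_mobius (hc : 1 < c ^ 2) {s : ℝ} (hs : s ∈ Ioo (c - 2) (c + 2)) :
    HasDerivAt (fun s ↦ arcsin (mobius c s))
      ((c ^ 2 - 1) / ((1 + c * s) * √(4 - (s - c) ^ 2))) s := by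
  have hP := one_add_mul_pos hc (Ioo_subset_Icc_self hs)
  have hQ := four_sub_sq_pos hs
  have hroot := sqrt_one_sub_mobius_sq hc hP hQ.le
  have hroot_pos : 0 < √(1 - mobius c s ^ 2) := by
    rw [hroot]; have := sub_pos.2 hc; positivity
  have hu : 0 < 1 - mobius c s ^ 2 := sqrt_pos.1 hroot_pos
  have hne₁ : mobius c s ≠ -1 := by rintro h; rw [h] at hu; norm_num at hu
  have hne₂ : mobius c s ≠ 1 := by rintro h; rw [h] at hu; norm_num at hu
  refine ((hasDerivAt_arcsin hne₁ hne₂).comp s (hasDerivAt_mobius hP.ne')).congr_deriv ?_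
  have := sqrt_pos.2 hQ
  rw [hroot]
  field_simp

lemma hasDerivAt_arcsin_half_sub {s : ℝ} (hs : s ∈ Ioo (c - 2) (c + 2)) :
    HasDerivAt (fun s ↦ arcsin ((s - c) / 2)) (1 / √(4 - (s - c) ^ 2)) s := by
  have hne₁ : (s - c) / 2 ≠ -1 := by intro h; linarith [hs.1]
  have hne₂ : (s - c) / 2 ≠ 1 := by intro h; linarith [hs.2]
  have hin : HasDerivAt (fun s ↦ (s - c) / 2) (1 / 2) s := by
    simpa using ((hasDerivAt_id s).sub_const c).div_const 2
  refine ((hasDerivAt_arcsin hne₁ hne₂).comp s hin).congr_deriv ?_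
  have hroot : √(1 - ((s - c) / 2) ^ 2) = √(4 - (s - c) ^ 2) / 2 := by
    rw [show 1 - ((s - c) / 2) ^ 2 = (4 - (s - c) ^ 2) / 2 ^ 2 by ring, sqrt_div' _ (by norm_num),
      sqrt_sq (by norm_num)]
  have := sqrt_pos.2 (four_sub_sq_pos hs)
  rw [hroot]
  field_simp

lemma hasDerivAt_sqrt_four_sub_sq {s : ℝ} (hs : s ∈ Ioo (c - 2) (c + 2)) :
    HasDerivAt (fun s ↦ √(4 - (s - c) ^ 2)) (-(s - c) / √(4 - (s - c) ^ 2)) s := by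
  have hin : HasDerivAt (fun s ↦ 4 - (s - c) ^ 2) (-(2 * (s - c))) s := by
    simpa using (((hasDerivAt_id s).sub_const c).pow 2).const_sub 4
  refine ((hasDerivAt_sqrt (four_sub_sq_pos hs).ne').comp s hin).congr_deriv ?_
  field_simp

lemma hasDerivAt_antideriv (hc : 1 < c ^ 2) {s : ℝ} (hs : s ∈ Ioo (c - 2) (c + 2)) :
    HasDerivAt (antideriv c) (√(4 - (s - c) ^ 2) / (2 * π * (1 + c * s))) s := by
  have hP := one_add_mul_pos hc (Ioo_subset_Icc_self hs)
  have hQ := four_sub_sq_pos hs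
  have hD := sqrt_pos.2 hQ
  have hc0 : c ≠ 0 := by rintro rfl; norm_num at hc
  refine ((((hasDerivAt_arcsin_half_sub hs).const_mul (1 + c ^ 2)).add
    ((hasDerivAt_sqrt_four_sub_sq hs).const_mul c)).sub
    ((hasDerivAt_arcsin_mobius hc hs).const_mul (c ^ 2 - 1))).div_const
    (2 * π * c ^ 2) |>.congr_deriv ?_
  have hD2 := sq_sqrt hQ.le
  generalize √(4 - (s - c) ^ 2) = D at *
  field_simp
  rw [hD2]
  ring

lemma continuousOn_antideriv (hc : 1 < c ^ 2) :
    ContinuousOn (antideriv c) (Icc (c - 2) (c + 2)) := by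
  refine ContinuousOn.div_const (ContinuousOn.sub (by fun_prop) ?_) _
  refine continuousOn_const.mul (continuous_arcsin.comp_continuousOn ?_)
  exact ContinuousOn.div (by fun_prop) (by fun_prop) fun s hs ↦ by
    have := one_add_mul_pos hc hs; positivity

lemma antideriv_sub_antideriv (hc : 1 < c ^ 2) :
    antideriv c (c + 2) - antideriv c (c - 2) = 1 / c ^ 2 := by
  have hc0 : c ≠ 0 := by rintro rfl; norm_num at hc
  simp only [antideriv, mobius_right hc, mobius_left hc, add_sub_cancel_left, sub_sub_cancel_left]
  norm_num [arcsin_neg]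
  field_simp
  ring

lemma intervalIntegrable_density (hc : 1 < c ^ 2) :
    IntervalIntegrable (fun s ↦ √(4 - (s - c) ^ 2) / (2 * π * (1 + c * s)))
      MeasureTheory.volume (c - 2) (c + 2) := by
  refine ContinuousOn.intervalIntegrable ?_
  rw [uIcc_of_le (by linarith)]
  exact ContinuousOn.div (by fun_prop) (by fun_prop) fun s hs ↦ by
    have := one_add_mul_pos hc hs; positivity

end TransitionDensity

open TransitionDensity in
theorem stmt_7 (c : ℝ) (hc : 1 < c) :
    (∫ s in (c - 2)..(c + 2), Real.sqrt (4 - (s - c) ^ 2) / (2 * Real.pi * (1 + c * s)))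
    = 1 / c ^ 2 := by
  have hc2 : 1 < c ^ 2 := by nlinarith
  rw [intervalIntegral.integral_eq_sub_of_hasDerivAt_of_le (by linarith)
    (continuousOn_antideriv hc2) (fun s hs ↦ hasDerivAt_antideriv hc2 hs)
    (intervalIntegrable_density hc2)]
  exact antideriv_sub_antideriv hc2
end

section
/- Let c ≥ 0 and let z be a real number with z > c + 2, and set G = (c + z − √((z−c)² − 4)) / (2(1+cz)). Then G > 0, c·G < 1, and 1/G + G/(1 − c·G) = z. -/
/-! `G_c(z)` is the smaller root of `(1 + c z) G² - (c + z) G + 1 = 0`, whose discriminant is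
`(z - c)² - 4`; clearing denominators in `1/G + G/(1 - c G) = z` gives exactly this quadratic. -/

lemma sqrt_sq_sub_four_lt {d : ℝ} (hd : 0 < d) : √(d ^ 2 - 4) < d :=
  (Real.sqrt_lt' hd).2 (by linarith)

lemma quadratic_eq_zero_of_eq_sub_sqrt_div {a b s G : ℝ} (ha : a ≠ 0)
    (hs : s ^ 2 = b ^ 2 - 4 * a) (hG : G = (b - s) / (2 * a)) :
    a * G ^ 2 - b * G + 1 = 0 := by
  rw [hG]
  field_simp
  linear_combination hs

lemma one_div_add_div_one_sub_mul_eq {c z G : ℝ} (hG : G ≠ 0) (hcG : 1 - c * G ≠ 0)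
    (hquad : (1 + c * z) * G ^ 2 - (c + z) * G + 1 = 0) :
    1 / G + G / (1 - c * G) = z := by
  rw [div_add_div _ _ hG hcG, div_eq_iff (mul_ne_zero hG hcG)]
  linear_combination hquad

theorem stmt_10 (c z G : ℝ) (hc : 0 ≤ c) (hz : c + 2 < z)
    (hG : G = (c + z - Real.sqrt ((z - c) ^ 2 - 4)) / (2 * (1 + c * z))) :
    0 < G ∧ c * G < 1 ∧ 1 / G + G / (1 - c * G) = z := by
  set s := √((z - c) ^ 2 - 4)
  have hs_nonneg : 0 ≤ s := Real.sqrt_nonneg _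
  have hs_sq : s ^ 2 = (z - c) ^ 2 - 4 := Real.sq_sqrt (by nlinarith)
  have hs_lt : s < z - c := sqrt_sq_sub_four_lt (by linarith)
  have hden : 0 < 2 * (1 + c * z) := by nlinarith
  have hG_pos : 0 < G := hG ▸ div_pos (by linarith) hden
  have hcG : c * G < 1 := by
    rw [hG, mul_div_assoc', div_lt_one hden]
    nlinarith
  have hquad : (1 + c * z) * G ^ 2 - (c + z) * G + 1 = 0 :=
    quadratic_eq_zero_of_eq_sub_sqrt_div (by linarith) (by rw [hs_sq]; ring) hG
  exact ⟨hG_pos, hcG, one_div_add_div_one_sub_mul_eq hG_pos.ne' (by linarith) hquad⟩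
end

section
/- Let α, β, Z be natural numbers with α < β. Then ∑_{z=0}^{Z} (−1)^z · binom(Z,z) · (α+z)!/(β+z)! = α! · (β−α+Z−1)! / [(β−α−1)! · (β+Z)!], as an identity of rational numbers. -/
/-!
Write `β = α + d + 1`. The sum is `(-1)^Z` times the `Z`-th forward difference at `α` of
`a ↦ a! / (a + d + 1)!`. A forward difference of `a ↦ (d + n)!/d! · a!/(a + d + 1 + n)!` is minus the
same expression with `n + 1`, because `(a + 1) - (a + d + n + 2) = -(d + n + 1)`; iterating `Z` times
gives the closed form.
-/

open Finset Nat fwdDiff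

theorem sum_neg_one_pow_mul_choose_mul {R : Type*} [CommRing R] (f : ℕ → R) (n a : ℕ) :
    ∑ k ∈ range (n + 1), (-1) ^ k * n.choose k * f (a + k) = (-1) ^ n * (Δ_[1])^[n] f a := by
  rw [fwdDiff_iter_eq_sum_shift, mul_sum]
  refine sum_congr rfl fun k hk => ?_
  obtain ⟨j, rfl⟩ := Nat.exists_eq_add_of_le (Nat.lt_succ_iff.mp (mem_range.mp hk))
  rw [zsmul_eq_mul, Nat.add_sub_cancel_left, smul_eq_mul, mul_one]
  push_cast
  rw [pow_add]
  ring_nf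
  rw [pow_mul', neg_one_sq, one_pow, mul_one]

def factorialRatio (d n a : ℕ) : ℚ :=
  (a ! * (d + n)! : ℚ) / (d ! * (a + d + 1 + n)!)

theorem factorialRatio_zero (d a : ℕ) : factorialRatio d 0 a = a ! / (a + d + 1)! := by
  rw [factorialRatio, add_zero, add_zero, mul_comm (d ! : ℚ), mul_div_mul_right _ _ (by positivity)]

theorem fwdDiff_factorialRatio (d n : ℕ) :
    Δ_[1] (factorialRatio d n) = -factorialRatio d (n + 1) := by
  funext a
  simp only [fwdDiff, factorialRatio, Pi.neg_apply]
  rw [show a + 1 + d + 1 + n = (a + d + 1 + n) + 1 by ring,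
    show a + d + 1 + (n + 1) = (a + d + 1 + n) + 1 by ring,
    show d + (n + 1) = d + n + 1 by ring]
  simp only [factorial_succ]
  push_cast
  field_simp
  ring

theorem fwdDiff_iter_factorialRatio (d n : ℕ) :
    (Δ_[1])^[n] (factorialRatio d 0) = (-1 : ℚ) ^ n • factorialRatio d n := by
  induction n with
  | zero => simp
  | succ n ih =>
    rw [Function.iterate_succ_apply', ih, fwdDiff_const_smul, fwdDiff_factorialRatio, pow_succ,
      mul_comm, mul_smul, neg_one_smul, smul_neg]

theorem stmt_13 (α β Z : ℕ) (h : α < β) :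
    ∑ z ∈ range (Z + 1),
      (-1 : ℚ) ^ z * (Z.choose z : ℚ) *
        ((Nat.factorial (α + z) : ℚ) / (Nat.factorial (β + z) : ℚ))
    = (Nat.factorial α : ℚ) * (Nat.factorial (β - α + Z - 1) : ℚ) /
        ((Nat.factorial (β - α - 1) : ℚ) * (Nat.factorial (β + Z) : ℚ)) := by
  obtain ⟨d, rfl⟩ : ∃ d, β = α + d + 1 := ⟨β - α - 1, by omega⟩
  have hsum := sum_neg_one_pow_mul_choose_mul (factorialRatio d 0) Z α
  rw [fwdDiff_iter_factorialRatio, Pi.smul_apply, smul_eq_mul, ← mul_assoc, ← pow_add,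
    Even.neg_one_pow ⟨Z, rfl⟩, one_mul] at hsum
  rw [show α + d + 1 - α + Z - 1 = d + Z by omega, show α + d + 1 - α - 1 = d by omega]
  refine (sum_congr rfl fun z _ => ?_).trans hsum
  rw [factorialRatio_zero, show α + z + d + 1 = α + d + 1 + z by omega]
end

section
/- Let s and l be integers with 2 ≤ l ≤ s, let V be a vector space over ℚ, and let Y : ℕ → V. Then ∑_{μ} (1/∏_{i≥1} m_i(μ)!) · (∑_{p ∈ μ} Y_p) = (1/(l−1)!) · ∑_{u=0}^{s−l} binom(l−2+u, u) · Y_{s−l+1−u}, where the outer sum ranges over all integer partitions μ of s with exactly l parts, m_i(μ) denotes the number of parts of μ equal to i, and ∑_{p ∈ μ} Y_p = ∑_{i≥1} m_i(μ) · Y_i sums Y over the parts of μ counted with multiplicity. -/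
/-!
Write `W(n, j)` for the sum of `1 / ∏ m_i(ν)!` over the partitions `ν` of `n` with `j` parts.
Removing one part `k` is a bijection from the partitions of `s` with `l` parts containing `k`
onto the partitions of `s - k` with `l - 1` parts, and the factor `m_k` in front of `Y_k`
exactly cancels the change of `m_k!`; hence the coefficient of `Y_k` is `W(s - k, l - 1)`.
Summing the same identity over `k` and using `∑ m_k = j` gives
`j W(n, j) = ∑_{i < n} W(i, j - 1)`, so `W(j + n, j) = C(n + j - 1, j - 1) / j!` by the
hockey-stick identity.
-/

open Finset Nat

namespace Multiset

variable {α : Type*} [DecidableEq α]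

def prodFactorialCount (m : Multiset α) : ℕ :=
  ∏ a ∈ m.toFinset, (m.count a)!

theorem prod_factorial_count_of_toFinset_subset {m : Multiset α} {s : Finset α}
    (h : m.toFinset ⊆ s) : ∏ a ∈ s, (m.count a)! = m.prodFactorialCount :=
  (prod_subset h fun a _ ha => by
    rw [count_eq_zero.2 (mt mem_toFinset.2 ha), factorial_zero]).symm

theorem prodFactorialCount_cons (a : α) (m : Multiset α) :
    (a ::ₘ m).prodFactorialCount = (m.count a + 1) * m.prodFactorialCount := by
  have ha : a ∈ (a ::ₘ m).toFinset := by simp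
  have hsub : m.toFinset ⊆ (a ::ₘ m).toFinset := by simp [toFinset_cons, subset_insert]
  rw [prodFactorialCount, ← prod_factorial_count_of_toFinset_subset hsub,
    ← mul_prod_erase _ _ ha, ← mul_prod_erase _ (fun b => (m.count b)!) ha, count_cons_self, factorial_succ, mul_assoc]
  congr 2
  exact prod_congr rfl fun b hb => by rw [count_cons_of_ne (ne_of_mem_erase hb)]

end Multiset

namespace Nat.Partition

variable {n : ℕ}

theorem toFinset_parts_subset_Icc (μ : n.Partition) : μ.parts.toFinset ⊆ Icc 1 n := by
  intro i hi
  rw [Multiset.mem_toFinset] at hi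
  exact mem_Icc.2 ⟨μ.parts_pos hi, le_of_mem_parts hi⟩

theorem prod_Icc_factorial_count (μ : n.Partition) :
    ∏ i ∈ Icc 1 n, (μ.parts.count i)! = μ.parts.prodFactorialCount :=
  Multiset.prod_factorial_count_of_toFinset_subset μ.toFinset_parts_subset_Icc

theorem sum_map_parts {M : Type*} [AddCommMonoid M] (μ : n.Partition) (f : ℕ → M) :
    (μ.parts.map f).sum = ∑ i ∈ Icc 1 n, μ.parts.count i • f i := by
  rw [sum_multiset_map_count]
  exact sum_subset μ.toFinset_parts_subset_Icc fun i _ hi => by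
    rw [Multiset.count_eq_zero.2 (mt Multiset.mem_toFinset.2 hi), zero_smul]

theorem sum_Icc_count_parts (μ : n.Partition) :
    ∑ i ∈ Icc 1 n, μ.parts.count i = Multiset.card μ.parts := by
  rw [← Multiset.toFinset_sum_count_eq]
  exact (sum_subset μ.toFinset_parts_subset_Icc fun i _ hi =>
    Multiset.count_eq_zero.2 (mt Multiset.mem_toFinset.2 hi)).symm

theorem card_parts_le (μ : n.Partition) : Multiset.card μ.parts ≤ n := by
  simpa [μ.parts_sum] using Multiset.card_nsmul_le_sum fun _ hi => μ.parts_pos hi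

end Nat.Partition

open Nat.Partition

theorem sum_Icc_sub_eq_sum_range {M : Type*} [AddCommMonoid M] (f : ℕ → M) (n : ℕ) :
    ∑ k ∈ Icc 1 n, f (n - k) = ∑ i ∈ range n, f i := by
  refine sum_nbij' (n - ·) (n - ·) ?_ ?_ ?_ ?_ ?_ <;> intro i hi <;>
    simp only [mem_Icc, mem_range] at hi ⊢ <;> omega

def partitionWeight (n j : ℕ) : ℚ :=
  ∑ μ ∈ univ.filter (fun μ : n.Partition => Multiset.card μ.parts = j),
    (μ.parts.prodFactorialCount : ℚ)⁻¹

theorem sum_count_div_prodFactorialCount_eq_partitionWeight {n k : ℕ} (j : ℕ) (hk : 1 ≤ k)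
    (hkn : k ≤ n) :
    ∑ μ ∈ univ.filter (fun μ : n.Partition => Multiset.card μ.parts = j + 1),
      (μ.parts.count k : ℚ) / μ.parts.prodFactorialCount = partitionWeight (n - k) j := by
  let g : n.Partition → ℚ := fun μ =>
    if Multiset.card μ.parts = j + 1 then (μ.parts.count k : ℚ) / μ.parts.prodFactorialCount
    else 0
  calc _ = ∑ μ, g μ := sum_filter _ _
    _ = ∑ μ ∈ univ.filter (fun μ : n.Partition => k ∈ μ.parts), g μ :=
        (sum_filter_of_ne fun μ _ hμ => by
          by_contra hk
          simp [g, Multiset.count_eq_zero.2 hk] at hμ).symm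
    _ = ∑ μ : {μ : n.Partition // k ∈ μ.parts}, g μ := sum_subtype _ (by simp) _
    _ = ∑ ν : (n - k).Partition, g ((partitionWithPartEquiv hk hkn).symm ν) :=
        ((partitionWithPartEquiv hk hkn).symm.sum_comp _).symm
    _ = partitionWeight (n - k) j := by
        rw [partitionWeight, sum_filter]
        refine sum_congr rfl fun ν _ => ?_
        simp only [g, partitionWithPartEquiv_symm_apply_parts, Multiset.card_cons,
          Multiset.count_cons_self, Multiset.prodFactorialCount_cons, add_left_inj]
        push_cast
        rw [div_mul_cancel_left₀ (by positivity)]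

theorem succ_mul_partitionWeight_succ (n j : ℕ) :
    (j + 1 : ℚ) * partitionWeight n (j + 1) = ∑ i ∈ range n, partitionWeight i j := by
  calc (j + 1 : ℚ) * partitionWeight n (j + 1)
      = ∑ μ ∈ univ.filter (fun μ : n.Partition => Multiset.card μ.parts = j + 1),
          ∑ k ∈ Icc 1 n, (μ.parts.count k : ℚ) / μ.parts.prodFactorialCount := by
        rw [partitionWeight, mul_sum]
        refine sum_congr rfl fun μ hμ => ?_
        rw [← sum_div, ← Nat.cast_sum, sum_Icc_count_parts, (mem_filter.1 hμ).2]
        push_cast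
        rfl
    _ = ∑ k ∈ Icc 1 n, partitionWeight (n - k) j := by
        rw [sum_comm]
        exact sum_congr rfl fun k hk =>
          sum_count_div_prodFactorialCount_eq_partitionWeight j (mem_Icc.1 hk).1 (mem_Icc.1 hk).2
    _ = ∑ i ∈ range n, partitionWeight i j := sum_Icc_sub_eq_sum_range (partitionWeight · j) n

theorem partitionWeight_eq_zero_of_lt {n j : ℕ} (h : n < j) : partitionWeight n j = 0 := by
  rw [partitionWeight, filter_false_of_mem fun μ _ hμ => by have := μ.card_parts_le; omega,
    sum_empty]

theorem partitionWeight_zero_zero : partitionWeight 0 0 = 1 := by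
  rw [partitionWeight, univ_unique, filter_singleton, if_pos (by simp), sum_singleton,
    Multiset.prodFactorialCount, partition_zero_parts]
  simp

theorem partitionWeight_succ_zero (n : ℕ) : partitionWeight (n + 1) 0 = 0 := by
  rw [partitionWeight, filter_false_of_mem fun μ _ hμ => ?_, sum_empty]
  have := μ.parts_sum
  rw [Multiset.card_eq_zero.1 hμ, Multiset.sum_zero] at this
  omega

theorem partitionWeight_succ_add_eq_choose (n j : ℕ) :
    partitionWeight (j + 1 + n) (j + 1) = (n + j).choose j / (j + 1)! := by
  induction j generalizing n with
  | zero =>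
    have h := succ_mul_partitionWeight_succ (n + 1) 0
    rw [sum_range_succ', partitionWeight_zero_zero,
      sum_eq_zero fun i _ => partitionWeight_succ_zero i] at h
    rw [zero_add, add_comm]
    simpa using h
  | succ j ih =>
    have h := succ_mul_partitionWeight_succ (j + 1 + (n + 1)) (j + 1)
    rw [sum_range_add, sum_eq_zero fun i hi => partitionWeight_eq_zero_of_lt (mem_range.1 hi),
      zero_add] at h
    simp_rw [ih, ← sum_div, ← Nat.cast_sum, sum_range_add_choose] at h
    rw [show j + 1 + 1 + n = j + 1 + (n + 1) by ring, show n + (j + 1) = n + j + 1 by ring,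
      factorial_succ, Nat.cast_mul, mul_comm, ← div_div, ← h]
    push_cast
    field_simp

theorem sum_filter_card_smul_sum_map_parts {V : Type*} [AddCommMonoid V] [Module ℚ V]
    (n j : ℕ) (Y : ℕ → V) :
    ∑ μ ∈ univ.filter (fun μ : n.Partition => Multiset.card μ.parts = j + 1),
      (μ.parts.prodFactorialCount : ℚ)⁻¹ • (μ.parts.map Y).sum
    = ∑ i ∈ range n, partitionWeight i j • Y (n - i) := by
  calc _ = ∑ μ ∈ univ.filter (fun μ : n.Partition => Multiset.card μ.parts = j + 1),
        ∑ k ∈ Icc 1 n, ((μ.parts.count k : ℚ) / μ.parts.prodFactorialCount) • Y k := by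
        refine sum_congr rfl fun μ _ => ?_
        rw [sum_map_parts, smul_sum]
        refine sum_congr rfl fun k _ => ?_
        rw [← Nat.cast_smul_eq_nsmul ℚ, smul_smul, inv_mul_eq_div]
    _ = ∑ k ∈ Icc 1 n, partitionWeight (n - k) j • Y k := by
        rw [sum_comm]
        refine sum_congr rfl fun k hk => ?_
        rw [← sum_smul, sum_count_div_prodFactorialCount_eq_partitionWeight j (mem_Icc.1 hk).1
          (mem_Icc.1 hk).2]
    _ = ∑ i ∈ range n, partitionWeight i j • Y (n - i) := by
        rw [← sum_Icc_sub_eq_sum_range (fun i => partitionWeight i j • Y (n - i))]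
        exact sum_congr rfl fun k hk => by rw [Nat.sub_sub_self (mem_Icc.1 hk).2]

theorem stmt_15 (s l : ℕ) (hl : 2 ≤ l) (hls : l ≤ s)
    (V : Type*) [AddCommGroup V] [Module ℚ V] (Y : ℕ → V) :
    ∑ μ ∈ Finset.univ.filter (fun μ : Nat.Partition s => Multiset.card μ.parts = l),
      ((1 : ℚ) / ((∏ i ∈ Finset.Icc 1 s, Nat.factorial (μ.parts.count i) : ℕ) : ℚ))
        • (μ.parts.map Y).sum
    = ((1 : ℚ) / (Nat.factorial (l - 1) : ℚ)) •
        ∑ u ∈ range (s - l + 1), (((l - 2 + u).choose u : ℕ) : ℚ) • Y (s - l + 1 - u) := by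
  obtain ⟨j, rfl⟩ : ∃ j, l = j + 1 + 1 := ⟨l - 2, by omega⟩
  obtain ⟨m, rfl⟩ : ∃ m, s = j + 1 + m := ⟨s - (j + 1), by omega⟩
  simp only [prod_Icc_factorial_count, one_div]
  rw [sum_filter_card_smul_sum_map_parts, sum_range_add,
    sum_eq_zero fun i hi => by rw [partitionWeight_eq_zero_of_lt (mem_range.1 hi), zero_smul],
    zero_add, smul_sum, show j + 1 + m - (j + 1 + 1) + 1 = m by omega]
  refine sum_congr rfl fun u _ => ?_
  rw [partitionWeight_succ_add_eq_choose, smul_smul, show j + 1 + 1 - 2 + u = u + j by omega,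
    Nat.add_sub_cancel, Nat.add_sub_add_left, Nat.choose_symm_add, div_eq_inv_mul]
end

section
/- Let R be a commutative ring, c ∈ R, M an R-module, and X : ℕ → M a sequence with X_0 = 0 and X_1 = 0. Then for every natural number k: ∑_{l=0}^{k−1} [∑_{m=0}^{⌊l/2⌋} binom(k+1, m) · binom(k+1−2m, l−2m) · (−c)^{l−2m}] · X_{k+1−l} = ∑_{m=0}^{⌊(k+1)/2⌋} binom(k+1, m) · [∑_{l=0}^{k−1−2m} binom(k+1−2m, l) · (−c)^l · X_{k+1−2m−l}]. -/
/-!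
Both sides are the same double sum over the pairs `(m, j)` with `2m + j < k` of
`binom(k+1, m) · binom(k+1-2m, j) · (-c)^j · X_{k+1-2m-j}`: on the left it is indexed by
`l = 2m + j`, on the right by `m` first. The right-hand side has one extra term, `m = ⌊(k+1)/2⌋`,
`j = 0`, which carries `X_0` or `X_1` and so vanishes.
-/

open Finset

theorem sum_range_sum_range_div_two_succ {M : Type*} [AddCommMonoid M] (f : ℕ → ℕ → M)
    (k : ℕ) :
    ∑ l ∈ range k, ∑ m ∈ range (l / 2 + 1), f m (l - 2 * m)
      = ∑ m ∈ range ((k + 1) / 2), ∑ j ∈ range (k - 2 * m), f m j := by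
  rw [sum_comm' (t' := range ((k + 1) / 2)) (s' := fun m => Ico (2 * m) k)
    (fun l m => by simp only [mem_range, mem_Ico]; omega)]
  refine sum_congr rfl fun m _ => ?_
  rw [sum_Ico_eq_sum_range]
  simp only [Nat.add_sub_cancel_left]

theorem stmt_18 (R : Type*) [CommRing R] (c : R) (M : Type*) [AddCommGroup M] [Module R M]
    (X : ℕ → M) (hX0 : X 0 = 0) (hX1 : X 1 = 0) (k : ℕ) :
    ∑ l ∈ range k,
      (∑ m ∈ range (l / 2 + 1),
          (((k + 1).choose m : R) * ((k + 1 - 2 * m).choose (l - 2 * m) : R)) *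
            (-c) ^ (l - 2 * m)) • X (k + 1 - l)
    = ∑ m ∈ range ((k + 1) / 2 + 1),
        ((k + 1).choose m : R) •
          ∑ l ∈ range (k - 1 - 2 * m + 1),
            (((k + 1 - 2 * m).choose l : R) * (-c) ^ l) • X (k + 1 - 2 * m - l) := by
  set g : ℕ → ℕ → M := fun m j =>
    ((k + 1).choose m : R) • (((k + 1 - 2 * m).choose j : R) * (-c) ^ j) • X (k + 1 - 2 * m - j)
  have hX : X (k + 1 - 2 * ((k + 1) / 2)) = 0 := by
    obtain h | h : k + 1 - 2 * ((k + 1) / 2) = 0 ∨ k + 1 - 2 * ((k + 1) / 2) = 1 := by omega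
    all_goals rw [h]; assumption
  calc _ = ∑ l ∈ range k, ∑ m ∈ range (l / 2 + 1), g m (l - 2 * m) := by
        refine sum_congr rfl fun l _ => ?_
        rw [sum_smul]
        refine sum_congr rfl fun m hm => ?_
        have hml : k + 1 - 2 * m - (l - 2 * m) = k + 1 - l := by
          rw [mem_range] at hm; omega
        simp only [g, hml, smul_smul, mul_assoc]
    _ = ∑ m ∈ range ((k + 1) / 2), ∑ j ∈ range (k - 2 * m), g m j :=
        sum_range_sum_range_div_two_succ g k
    _ = _ := by
        rw [sum_range_succ, show k - 1 - 2 * ((k + 1) / 2) + 1 = 1 by omega, sum_range_one,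
          Nat.sub_zero, hX, smul_zero, smul_zero, add_zero]
        refine sum_congr rfl fun m hm => ?_
        rw [mem_range] at hm
        rw [show k - 1 - 2 * m + 1 = k - 2 * m by omega, smul_sum]
end

section
/- For integers p, q ≥ 2 and a real number c, set K(p, q) = ∑_{r=2}^{min(p,q)} r · binom(p, r) · binom(q, r) · c^{p+q−2r}. Then for all integers k, j ≥ 2 and every real c: ∑_{a=0}^{k−2} ∑_{b=0}^{j−2} binom(k, a) · binom(j, b) · (−c)^{a+b} · K(k−a, j−b) = k if k = j, and = 0 if k ≠ j. -/
/-!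
Write `K(p, q) = ∑_{r ≥ 2} r · e_r(p) · e_r(q)` with `e_r(p) = binom(p, r) · c^(p-r)`, the
coefficient of `X^r` in `(X + c)^p`. Then `∑_a binom(k, a) (-c)^a e_r(k - a)` is the coefficient
of `X^r` in `((X + c) - c)^k = X^k`, i.e. `δ_{rk}`; the terms `a = k - 1, k` missing from the sum
defining `Y_k` vanish because `r ≥ 2`. The double sum thus collapses to `∑_r r δ_{rk} δ_{rj}`.
-/

open Finset

/-- The limiting covariance `K(p,q) = Cov(X_p, X_q)` of the fluctuations of the central
characters under Schur-Weyl measures of parameters `α = 1/2` and `c`. -/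
noncomputable def swCov (c : ℝ) (p q : ℕ) : ℝ :=
  ∑ r ∈ Finset.Icc 2 (min p q), (r : ℝ) * (p.choose r : ℝ) * (q.choose r : ℝ) * c ^ (p + q - 2 * r)

open Polynomial in
theorem sum_choose_mul_neg_pow_mul_choose_mul_pow {R : Type*} [CommRing R] (c : R) (k r : ℕ) :
    ∑ a ∈ range (k + 1), (k.choose a : R) * (-c) ^ a * ((k - a).choose r * c ^ (k - a - r))
      = if r = k then 1 else 0 := by
  have hpow : (C (-c) + (X + C c)) ^ k = X ^ k := by rw [map_neg]; ring
  rw [← coeff_X_pow, ← hpow, add_pow, finsetSum_coeff]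
  refine sum_congr rfl fun a _ => Eq.symm ?_
  rw [← C_pow, ← C_eq_natCast, mul_right_comm, ← C_mul, coeff_C_mul, coeff_X_add_C_pow]
  ring

theorem sum_range_sub_one_choose_mul_neg_pow_mul_choose_mul_pow {R : Type*} [CommRing R]
    (c : R) {k r : ℕ} (hr : 2 ≤ r) :
    ∑ a ∈ range (k - 1), (k.choose a : R) * (-c) ^ a * ((k - a).choose r * c ^ (k - a - r))
      = if r = k then 1 else 0 := by
  rw [← sum_choose_mul_neg_pow_mul_choose_mul_pow c k r]
  refine sum_subset (range_subset_range.mpr (by omega)) fun a ha ha' => ?_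
  rw [mem_range] at ha ha'
  rw [Nat.choose_eq_zero_of_lt (by omega : k - a < r)]
  simp

theorem swCov_eq_sum_Icc (c : ℝ) {p q N : ℕ} (hN : p ≤ N) :
    swCov c p q = ∑ r ∈ Icc 2 N,
      (r : ℝ) * ((p.choose r : ℝ) * c ^ (p - r)) * ((q.choose r : ℝ) * c ^ (q - r)) := by
  refine sum_subset_zero_on_sdiff (Icc_subset_Icc_right (by omega)) (fun r hr => ?_)
    (fun r hr => ?_)
  · rw [mem_sdiff, mem_Icc, mem_Icc, le_min_iff] at hr
    rcases Nat.lt_or_ge p r with h | h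
    · simp [Nat.choose_eq_zero_of_lt h]
    · simp [Nat.choose_eq_zero_of_lt (by omega : q < r)]
  · rw [mem_Icc, le_min_iff] at hr
    rw [show p + q - 2 * r = (p - r) + (q - r) by omega, pow_add]
    ring

theorem stmt_19_general (k j : ℕ) (hk : 2 ≤ k) (c : ℝ) :
    ∑ a ∈ range (k - 1), ∑ b ∈ range (j - 1),
      (k.choose a : ℝ) * (j.choose b : ℝ) * (-c) ^ (a + b) * swCov c (k - a) (j - b)
    = if k = j then (k : ℝ) else 0 := by
  set t : ℕ → ℕ → ℕ → ℝ := fun n a r =>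
    (n.choose a : ℝ) * (-c) ^ a * ((n - a).choose r * c ^ (n - a - r))
  have hterm : ∀ a ∈ range (k - 1), ∀ b ∈ range (j - 1),
      (k.choose a : ℝ) * (j.choose b : ℝ) * (-c) ^ (a + b) * swCov c (k - a) (j - b)
        = ∑ r ∈ Icc 2 k, (r : ℝ) * t k a r * t j b r := fun a _ b _ => by
    rw [swCov_eq_sum_Icc c (Nat.sub_le k a), mul_sum]
    exact sum_congr rfl fun r _ => by ring
  calc _ = ∑ r ∈ Icc 2 k,
          (r : ℝ) * (∑ a ∈ range (k - 1), t k a r) * ∑ b ∈ range (j - 1), t j b r := by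
        rw [sum_congr rfl fun a ha => sum_congr rfl (hterm a ha)]
        simp only [mul_sum, sum_mul]
        rw [sum_comm, sum_congr rfl fun _ _ => sum_comm, sum_comm]
    _ = ∑ r ∈ Icc 2 k, (r : ℝ) * (if r = k then 1 else 0) * (if r = j then 1 else 0) := by
        refine sum_congr rfl fun r hr => ?_
        rw [mem_Icc] at hr
        simp only [t, sum_range_sub_one_choose_mul_neg_pow_mul_choose_mul_pow c hr.1]
    _ = if k = j then (k : ℝ) else 0 := by
        rw [sum_eq_single_of_mem k (by simp [hk]) fun r _ hrk => by simp [hrk]]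
        simp

theorem stmt_19 (k j : ℕ) (hk : 2 ≤ k) (hj : 2 ≤ j) (c : ℝ) :
    ∑ a ∈ range (k - 1), ∑ b ∈ range (j - 1),
      (k.choose a : ℝ) * (j.choose b : ℝ) * (-c) ^ (a + b) * swCov c (k - a) (j - b)
    = if k = j then (k : ℝ) else 0 :=
  stmt_19_general k j hk c
end
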